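/- For the harmonic-oscillator Hamiltonian H(q,p) = ω²q²/2 + p²/2 with q ∼ Normal(0, 1/ω²) and p ∼ Normal(0, 1) independent, ω > 0, and step-size ε > 0 satisfying ε²ω² < 4 (the stability condition), the expected squared one-step jump in position of the inverted leapfrog integrator is strictly smaller than that of the standard leapfrog integrator: E[(Proj_q(Ψ_ε(q,p)) − q)²] < E[(Proj_q(Φ_ε(q,p)) − q)²], where Φ_ε is one leapfrog step and Ψ_ε is one inverted leapfrog step. -/

import Mathlib

open MeasureTheory ProbabilityTheory Real Filter
open scoped NNReal ENNReal

/-- One leapfrog step for `H(q,p) = ω²q²/2 + p²/2` with step-size `ε`. -/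
noncomputable def leapfrogHO (ω ε : ℝ) (x : ℝ × ℝ) : ℝ × ℝ :=
  let pb := x.2 - (ε / 2) * (ω ^ 2 * x.1)
  let qt := x.1 + ε * pb
  let pt := pb - (ε / 2) * (ω ^ 2 * qt)
  (qt, pt)

/-- One inverted leapfrog step for `H(q,p) = ω²q²/2 + p²/2` with step-size `ε`. -/
noncomputable def invertedLeapfrogHO (ω ε : ℝ) (x : ℝ × ℝ) : ℝ × ℝ :=
  let qb := x.1 + (ε / 2) * x.2
  let pt := x.2 - ε * (ω ^ 2 * qb)
  let qt := qb + (ε / 2) * pt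
  (qt, pt)

lemma my_integrable_sq_exp {b : ℝ} (hb : 0 < b) :
    Integrable fun x : ℝ => x ^ 2 * Real.exp (-b * x ^ 2) := by
  have h := integrable_rpow_mul_exp_neg_mul_sq hb (s := 2) (by norm_num)
  simpa [Real.rpow_two] using h

lemma my_tendsto_top {b : ℝ} (hb : 0 < b) :
    Tendsto (fun x : ℝ => x * Real.exp (-b * x ^ 2)) atTop (nhds 0) := by
  have h := rpow_mul_exp_neg_mul_sq_isLittleO_exp_neg hb 1
  simp_rw [Real.rpow_one] at h
  refine h.isBigO.trans_tendsto ?_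
  have : Tendsto (fun x : ℝ => -(1/2 : ℝ) * x) atTop atBot :=
    Tendsto.const_mul_atTop_of_neg (by norm_num) tendsto_id
  exact Real.tendsto_exp_atBot.comp this

lemma my_tendsto_bot {b : ℝ} (hb : 0 < b) :
    Tendsto (fun x : ℝ => x * Real.exp (-b * x ^ 2)) atBot (nhds 0) := by
  have h := ((my_tendsto_top hb).neg).comp tendsto_neg_atBot_atTop
  rw [neg_zero] at h
  refine h.congr fun x => ?_
  simp only [Function.comp_apply, neg_neg, neg_mul]
  ring_nf

lemma my_integral_sq_exp {b : ℝ} (hb : 0 < b) :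
    ∫ x : ℝ, x ^ 2 * Real.exp (-b * x ^ 2) = Real.sqrt (π / b) / (2 * b) := by
  set g : ℝ → ℝ := fun x => -(1 / (2 * b)) * (x * Real.exp (-b * x ^ 2)) with hg
  have hderiv : ∀ x : ℝ, HasDerivAt g
      (x ^ 2 * Real.exp (-b * x ^ 2) - (1 / (2 * b)) * Real.exp (-b * x ^ 2)) x := by
    intro x
    have h1 : HasDerivAt (fun x : ℝ => -b * x ^ 2) (-b * (2 * x)) x := by
      simpa using ((hasDerivAt_pow 2 x).const_mul (-b))
    have h2 : HasDerivAt (fun x : ℝ => Real.exp (-b * x ^ 2))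
        (Real.exp (-b * x ^ 2) * (-b * (2 * x))) x := h1.exp
    have h3 := ((hasDerivAt_id x).mul h2).const_mul (-(1 / (2 * b)))
    have hb' : b ≠ 0 := ne_of_gt hb
    refine h3.congr_deriv ?_
    simp only [id]
    field_simp
    ring
  have hint : Integrable (fun x : ℝ =>
      x ^ 2 * Real.exp (-b * x ^ 2) - (1 / (2 * b)) * Real.exp (-b * x ^ 2)) :=
    (my_integrable_sq_exp hb).sub ((integrable_exp_neg_mul_sq hb).const_mul _)
  have htop : Tendsto g atTop (nhds 0) := by
    have h := (my_tendsto_top hb).const_mul (-(1 / (2 * b)))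
    rwa [mul_zero] at h
  have hbot : Tendsto g atBot (nhds 0) := by
    have h := (my_tendsto_bot hb).const_mul (-(1 / (2 * b)))
    rwa [mul_zero] at h
  have h0 := integral_of_hasDerivAt_of_tendsto hderiv hint hbot htop
  rw [sub_zero] at h0
  have key : ∫ x : ℝ, x ^ 2 * Real.exp (-b * x ^ 2)
      = (∫ x : ℝ, (x ^ 2 * Real.exp (-b * x ^ 2) - (1 / (2 * b)) * Real.exp (-b * x ^ 2)))
        + ∫ x : ℝ, (1 / (2 * b)) * Real.exp (-b * x ^ 2) := by
    rw [← integral_add hint ((integrable_exp_neg_mul_sq hb).const_mul _)]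
    congr 1
    ext x
    ring
  rw [key, h0, zero_add, integral_const_mul, integral_gaussian]
  ring

lemma my_integral_id_exp {b : ℝ} (hb : 0 < b) :
    ∫ x : ℝ, x * Real.exp (-b * x ^ 2) = 0 := by
  refine integral_eq_zero_of_hasDerivAt_of_integrable
    (f := fun x => -(1 / (2 * b)) * Real.exp (-b * x ^ 2)) ?_ (integrable_mul_exp_neg_mul_sq hb)
    ((integrable_exp_neg_mul_sq hb).const_mul _)
  intro x
  have h1 : HasDerivAt (fun x : ℝ => -b * x ^ 2) (-b * (2 * x)) x := by
    simpa using ((hasDerivAt_pow 2 x).const_mul (-b))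
  have h2 := (h1.exp).const_mul (-(1 / (2 * b)))
  have hb' : b ≠ 0 := ne_of_gt hb
  refine h2.congr_deriv ?_
  field_simp

lemma my_pdf_eq {v : ℝ≥0} (x : ℝ) :
    gaussianPDFReal 0 v x
      = (Real.sqrt (2 * π * v))⁻¹ * Real.exp (-(2 * (v:ℝ))⁻¹ * x ^ 2) := by
  rw [gaussianPDFReal]
  congr 1
  rw [sub_zero]
  by_cases hv : (v:ℝ) = 0
  · simp [hv]
  · field_simp

lemma my_integral_gaussian_eq {v : ℝ≥0} (hv : v ≠ 0) (g : ℝ → ℝ) :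
    ∫ x, g x ∂(gaussianReal 0 v) = ∫ x, gaussianPDFReal 0 v x * g x := by
  rw [gaussianReal_of_var_ne_zero 0 hv]
  have hpdf : gaussianPDF 0 v = fun x => ((gaussianPDFReal 0 v x).toNNReal : ℝ≥0∞) := rfl
  rw [hpdf, integral_withDensity_eq_integral_smul
    ((measurable_gaussianPDFReal 0 v).real_toNNReal) g]
  congr 1
  ext x
  rw [NNReal.smul_def, smul_eq_mul, Real.coe_toNNReal _ (gaussianPDFReal_nonneg 0 v x)]

lemma my_integrable_gaussian_iff {v : ℝ≥0} (hv : v ≠ 0) (g : ℝ → ℝ) :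
    Integrable g (gaussianReal 0 v)
      ↔ Integrable (fun x => gaussianPDFReal 0 v x * g x) := by
  rw [gaussianReal_of_var_ne_zero 0 hv]
  have hpdf : gaussianPDF 0 v = fun x => ((gaussianPDFReal 0 v x).toNNReal : ℝ≥0∞) := rfl
  rw [hpdf, integrable_withDensity_iff_integrable_smul
    ((measurable_gaussianPDFReal 0 v).real_toNNReal)]
  have heq : (fun x => (gaussianPDFReal 0 v x).toNNReal • g x)
      = fun x => gaussianPDFReal 0 v x * g x := by
    ext x
    rw [NNReal.smul_def, smul_eq_mul, Real.coe_toNNReal _ (gaussianPDFReal_nonneg 0 v x)]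
  rw [heq]

lemma my_vb {v : ℝ≥0} (hv : v ≠ 0) : (0:ℝ) < (2 * (v:ℝ))⁻¹ := by
  have : (0:ℝ) < v := lt_of_le_of_ne (v.coe_nonneg) (by exact_mod_cast (Ne.symm hv))
  positivity

lemma my_integrable_sq_gaussian {v : ℝ≥0} (hv : v ≠ 0) :
    Integrable (fun x : ℝ => x ^ 2) (gaussianReal 0 v) := by
  rw [my_integrable_gaussian_iff hv]
  have h := ((my_integrable_sq_exp (my_vb hv)).const_mul (Real.sqrt (2 * π * v))⁻¹)
  refine h.congr (Filter.Eventually.of_forall fun x => ?_)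
  simp only [my_pdf_eq]
  ring

lemma my_integrable_id_gaussian {v : ℝ≥0} (hv : v ≠ 0) :
    Integrable (fun x : ℝ => x) (gaussianReal 0 v) := by
  rw [my_integrable_gaussian_iff hv]
  have h := ((integrable_mul_exp_neg_mul_sq (my_vb hv)).const_mul (Real.sqrt (2 * π * v))⁻¹)
  refine h.congr (Filter.Eventually.of_forall fun x => ?_)
  simp only [my_pdf_eq]
  ring

lemma my_integral_sq_gaussian {v : ℝ≥0} (hv : v ≠ 0) :
    ∫ x, x ^ 2 ∂(gaussianReal 0 v) = (v : ℝ) := by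
  have hv' : (0:ℝ) < v := lt_of_le_of_ne (v.coe_nonneg) (by exact_mod_cast (Ne.symm hv))
  rw [my_integral_gaussian_eq hv]
  calc ∫ x : ℝ, gaussianPDFReal 0 v x * x ^ 2
      = ∫ x : ℝ, (Real.sqrt (2 * π * v))⁻¹ * (x ^ 2 * Real.exp (-(2 * (v:ℝ))⁻¹ * x ^ 2)) := by
        congr 1; ext x; rw [my_pdf_eq]; ring
    _ = (Real.sqrt (2 * π * v))⁻¹
          * (Real.sqrt (π / (2 * (v:ℝ))⁻¹) / (2 * (2 * (v:ℝ))⁻¹)) := by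
        rw [integral_const_mul, my_integral_sq_exp (my_vb hv)]
    _ = (v : ℝ) := by
        rw [show π / (2 * (v:ℝ))⁻¹ = 2 * π * v by field_simp]
        rw [show 2 * (2 * (v:ℝ))⁻¹ = (v:ℝ)⁻¹ by field_simp]
        have h1 : Real.sqrt (2 * π * v) ≠ 0 := by
          refine ne_of_gt (Real.sqrt_pos.2 ?_)
          positivity
        field_simp

lemma my_integral_id_gaussian {v : ℝ≥0} (hv : v ≠ 0) :
    ∫ x, x ∂(gaussianReal 0 v) = 0 := by
  rw [my_integral_gaussian_eq hv]
  calc ∫ x : ℝ, gaussianPDFReal 0 v x * x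
      = ∫ x : ℝ, (Real.sqrt (2 * π * v))⁻¹ * (x * Real.exp (-(2 * (v:ℝ))⁻¹ * x ^ 2)) := by
        congr 1; ext x; rw [my_pdf_eq]; ring
    _ = 0 := by rw [integral_const_mul, my_integral_id_exp (my_vb hv), mul_zero]

lemma my_expected_sq_linear (A B : ℝ) {v : ℝ≥0} (hv : v ≠ 0) :
    ∫ x : ℝ × ℝ, (A * x.1 + B * x.2) ^ 2
        ∂((gaussianReal 0 v).prod (gaussianReal 0 1))
      = A ^ 2 * (v : ℝ) + B ^ 2 := by
  have hone : (1 : ℝ≥0) ≠ 0 := one_ne_zero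
  have h1 : Integrable (fun z : ℝ × ℝ => (A ^ 2 * z.1 ^ 2) * (1 : ℝ))
      ((gaussianReal 0 v).prod (gaussianReal 0 1)) :=
    ((my_integrable_sq_gaussian hv).const_mul _).mul_prod (integrable_const 1)
  have h2 : Integrable (fun z : ℝ × ℝ => (2 * A * B * z.1) * z.2)
      ((gaussianReal 0 v).prod (gaussianReal 0 1)) :=
    ((my_integrable_id_gaussian hv).const_mul _).mul_prod (my_integrable_id_gaussian hone)
  have h3 : Integrable (fun z : ℝ × ℝ => (1 : ℝ) * (B ^ 2 * z.2 ^ 2))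
      ((gaussianReal 0 v).prod (gaussianReal 0 1)) :=
    (integrable_const 1).mul_prod ((my_integrable_sq_gaussian hone).const_mul _)
  have key : (fun x : ℝ × ℝ => (A * x.1 + B * x.2) ^ 2)
      = fun z : ℝ × ℝ => (A ^ 2 * z.1 ^ 2) * (1 : ℝ)
          + ((2 * A * B * z.1) * z.2 + (1 : ℝ) * (B ^ 2 * z.2 ^ 2)) := by
    ext z; ring
  have h23 : Integrable (fun z : ℝ × ℝ => (2 * A * B * z.1) * z.2 + (1 : ℝ) * (B ^ 2 * z.2 ^ 2))
      ((gaussianReal 0 v).prod (gaussianReal 0 1)) := h2.add h3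
  rw [key, integral_add h1 h23, integral_add h2 h3,
    integral_prod_mul (fun x : ℝ => A ^ 2 * x ^ 2) (fun _ : ℝ => (1 : ℝ)),
    integral_prod_mul (fun x : ℝ => 2 * A * B * x) (fun y : ℝ => y),
    integral_prod_mul (fun _ : ℝ => (1 : ℝ)) (fun y : ℝ => B ^ 2 * y ^ 2),
    integral_const, integral_const]
  simp only [measure_univ, ENNReal.toReal_one, probReal_univ, smul_eq_mul, one_mul, mul_one]
  rw [integral_const_mul, integral_const_mul, integral_const_mul,
    my_integral_sq_gaussian hv, my_integral_sq_gaussian hone,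
    my_integral_id_gaussian hv, my_integral_id_gaussian hone]
  push_cast
  ring


/-- under the stability condition `ε²ω² < 4`, the expected squared
one-step jump in position of the inverted leapfrog is strictly smaller than that of
the standard leapfrog, at stationarity (`q ∼ N(0,1/ω²)`, `p ∼ N(0,1)` independent). -/
theorem invertedLeapfrog_smaller_expected_jump
    (ω ε : ℝ) (hω : 0 < ω) (hε : 0 < ε) (hstab : ε ^ 2 * ω ^ 2 < 4) :
    ∫ x : ℝ × ℝ, ((invertedLeapfrogHO ω ε x).1 - x.1) ^ 2
        ∂((gaussianReal 0 (Real.toNNReal (1 / ω ^ 2))).prod (gaussianReal 0 1))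
      < ∫ x : ℝ × ℝ, ((leapfrogHO ω ε x).1 - x.1) ^ 2
        ∂((gaussianReal 0 (Real.toNNReal (1 / ω ^ 2))).prod (gaussianReal 0 1)) := by
  have hvpos : (0:ℝ) < 1 / ω ^ 2 := by positivity
  have hv : Real.toNNReal (1 / ω ^ 2) ≠ 0 := by
    simp only [ne_eq, Real.toNNReal_eq_zero, not_le]
    exact hvpos
  have hvc : ((Real.toNNReal (1 / ω ^ 2)) : ℝ) = 1 / ω ^ 2 :=
    Real.coe_toNNReal _ hvpos.le
  have hL : ∀ x : ℝ × ℝ, ((leapfrogHO ω ε x).1 - x.1) ^ 2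
      = ((-(ε ^ 2 * ω ^ 2 / 2)) * x.1 + ε * x.2) ^ 2 := by
    intro x; simp only [leapfrogHO]; ring
  have hI : ∀ x : ℝ × ℝ, ((invertedLeapfrogHO ω ε x).1 - x.1) ^ 2
      = ((-(ε ^ 2 * ω ^ 2 / 2)) * x.1 + (ε * (1 - ε ^ 2 * ω ^ 2 / 4)) * x.2) ^ 2 := by
    intro x; simp only [invertedLeapfrogHO]; ring
  simp only [hL, hI]
  rw [my_expected_sq_linear _ _ hv, my_expected_sq_linear _ _ hv, hvc]
  have hω2 : (0:ℝ) < ω ^ 2 := by positivity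
  have hB : (ε * (1 - ε ^ 2 * ω ^ 2 / 4)) ^ 2 < ε ^ 2 := by
    have ht : 0 < ε ^ 2 * ω ^ 2 / 4 := by positivity
    have ht2 : ε ^ 2 * ω ^ 2 / 4 < 1 := by linarith
    nlinarith [mul_pos (pow_pos hε 2)
      (mul_pos ht (by linarith : (0:ℝ) < 2 - ε ^ 2 * ω ^ 2 / 4))]
  linarith
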